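/- arXiv:2306.03057 — 3 statements merged into one kernel-verified Lean document; each statement's English description precedes it below -/
import Mathlib

section
/- Let (X, 𝓑, μ) be a probability space, 𝓚 ⊆ 𝓑 a compact class with μ 𝓚-inner regular, (Δ, 𝓓, ν) a probability space, and suppose for each K ∈ 𝓚 we are given a measurable set K̂ ∈ 𝓓 such that ν(K̂₁ ∩ ⋯ ∩ K̂ₘ) = μ(K₁ ∩ ⋯ ∩ Kₘ) for all finite families from 𝓚 (in particular the assignment preserves finite intersections up to measure). Define ρ : Δ → X by choosing ρ(δ) to be an arbitrary element of ⋂{K ∈ 𝓚 : δ ∈ K̂} (and arbitrary when this family is empty). Then for every B ∈ 𝓑, ρ⁻¹(B) is ν-measurable (in the completion) and ν(ρ⁻¹(B)) = μ(B); i.e., ρ is measurable and measure-preserving. -/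
open MeasureTheory Set ENNReal

/-- A collection of sets is a *compact class* if every subcollection with the
finite intersection property has nonempty intersection. -/
def CompactClass {X : Type*} (𝓚 : Set (Set X)) : Prop :=
  ∀ 𝓐 ⊆ 𝓚, (∀ F : Finset (Set X), ↑F ⊆ 𝓐 → (⋂₀ (F : Set (Set X))).Nonempty) →
    (⋂₀ 𝓐).Nonempty

/-- Given a compact class `𝓚` witnessing inner regularity of `μ`, measurable
representatives `K̂` in `(Δ, ν)` matching measures of all finite intersections,
and `ρ : Δ → X` choosing a point of `⋂ {K ∈ 𝓚 : δ ∈ K̂}`, the map `ρ` is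
measure-preserving: for every measurable `B`, `ρ⁻¹(B)` is `ν`-null measurable
with `ν(ρ⁻¹ B) = μ B`. -/
theorem stmt2 {X Δ : Type*} [MeasurableSpace X] [MeasurableSpace Δ]
    (μ : Measure X) [IsProbabilityMeasure μ] (ν : Measure Δ) [IsProbabilityMeasure ν]
    (𝓚 : Set (Set X)) (h𝓚meas : ∀ K ∈ 𝓚, MeasurableSet K)
    (hcc : CompactClass 𝓚)
    (hreg : ∀ B : Set X, MeasurableSet B →
      μ B = ⨆ (K : Set X) (_ : K ∈ 𝓚 ∧ K ⊆ B), μ K)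
    (hat : Set X → Set Δ) (hhatmeas : ∀ K ∈ 𝓚, MeasurableSet (hat K))
    (hhat : ∀ F : Finset (Set X), ↑F ⊆ 𝓚 →
      ν (⋂ K ∈ F, hat K) = μ (⋂ K ∈ F, K))
    (ρ : Δ → X) (hρ : ∀ δ : Δ, ∀ K ∈ 𝓚, δ ∈ hat K → ρ δ ∈ K) :
    ∀ B : Set X, MeasurableSet B →
      NullMeasurableSet (ρ ⁻¹' B) ν ∧ ν (ρ ⁻¹' B) = μ B := by
  -- measure of a single hat set
  have hsingle : ∀ K ∈ 𝓚, ν (hat K) = μ K := by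
    intro K hK
    have := hhat {K} (by simpa using hK)
    simpa using this
  -- key approximation: inner approximation of ρ⁻¹ B by measurable sets
  have key : ∀ B : Set X, MeasurableSet B → ∀ ε : ℝ≥0∞, 0 < ε →
      ∃ A : Set Δ, MeasurableSet A ∧ A ⊆ ρ ⁻¹' B ∧ μ B ≤ ν A + ε := by
    intro B hB ε hε
    by_cases hεB : μ B ≤ ε
    · exact ⟨∅, MeasurableSet.empty, empty_subset _, by simpa using hεB⟩
    · push_neg at hεB
      have hlt : μ B - ε < ⨆ (K : Set X) (_ : K ∈ 𝓚 ∧ K ⊆ B), μ K := by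
        rw [← hreg B hB]
        exact ENNReal.sub_lt_self (measure_ne_top μ B) (lt_trans hε hεB).ne' hε.ne'
      rw [lt_iSup_iff] at hlt
      obtain ⟨K, hK⟩ := hlt
      rw [lt_iSup_iff] at hK
      obtain ⟨⟨hK𝓚, hKB⟩, hKlt⟩ := hK
      refine ⟨hat K, hhatmeas K hK𝓚, ?_, ?_⟩
      · intro δ hδ
        exact hKB (hρ δ K hK𝓚 hδ)
      · rw [hsingle K hK𝓚]
        exact tsub_le_iff_right.mp hKlt.le
  intro B hB
  -- for each n, get inner and outer approximations
  have approx : ∀ n : ℕ, ∃ A C : Set Δ, MeasurableSet A ∧ MeasurableSet C ∧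
      A ⊆ ρ ⁻¹' B ∧ ρ ⁻¹' B ⊆ C ∧
      μ B ≤ ν A + (n : ℝ≥0∞)⁻¹ ∧ ν C ≤ μ B + (n : ℝ≥0∞)⁻¹ := by
    intro n
    by_cases hn : n = 0
    · refine ⟨∅, univ, MeasurableSet.empty, MeasurableSet.univ,
        empty_subset _, subset_univ _, ?_, ?_⟩ <;> simp [hn]
    · have hεpos : (0 : ℝ≥0∞) < (n : ℝ≥0∞)⁻¹ := by
        simp [ENNReal.inv_pos]
      obtain ⟨A, hAm, hAsub, hAle⟩ := key B hB _ hεpos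
      obtain ⟨A', hA'm, hA'sub, hA'le⟩ := key Bᶜ hB.compl _ hεpos
      refine ⟨A, A'ᶜ, hAm, hA'm.compl, hAsub, ?_, hAle, ?_⟩
      · intro δ hδ hδ'
        exact hA'sub hδ' hδ
      · have h1 : ν A'ᶜ = 1 - ν A' := by
          rw [measure_compl hA'm (measure_ne_top ν A')]
          simp
        have h2 : μ Bᶜ = 1 - μ B := by
          rw [measure_compl hB (measure_ne_top μ B)]
          simp
        rw [h1]
        rw [h2] at hA'le
        -- 1 - μ B ≤ ν A' + ε  ⇒  1 - ν A' ≤ μ B + ε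
        have hμB1 : μ B ≤ 1 := prob_le_one
        have hνA'1 : ν A' ≤ 1 := prob_le_one
        have : 1 ≤ ν A' + (n : ℝ≥0∞)⁻¹ + μ B := by
          calc (1 : ℝ≥0∞) = (1 - μ B) + μ B := by
                rw [tsub_add_cancel_of_le hμB1]
            _ ≤ ν A' + (n : ℝ≥0∞)⁻¹ + μ B := add_le_add_left hA'le _
        rw [tsub_le_iff_right]
        calc (1 : ℝ≥0∞) ≤ ν A' + (n : ℝ≥0∞)⁻¹ + μ B := this
          _ = μ B + (n : ℝ≥0∞)⁻¹ + ν A' := by ring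
  choose A C hAm hCm hAsub hCsub hAle hCle using approx
  set U : Set Δ := ⋃ n, A n with hU
  set V : Set Δ := ⋂ n, C n with hV
  have hUm : MeasurableSet U := MeasurableSet.iUnion hAm
  have hVm : MeasurableSet V := MeasurableSet.iInter hCm
  have hUsub : U ⊆ ρ ⁻¹' B := iUnion_subset hAsub
  have hVsub : ρ ⁻¹' B ⊆ V := subset_iInter hCsub
  have hμU : μ B ≤ ν U := by
    refine ENNReal.le_of_forall_pos_le_add fun ε hε hfin => ?_
    obtain ⟨n, hn⟩ := ENNReal.exists_inv_nat_lt (by exact_mod_cast hε.ne' : (ε : ℝ≥0∞) ≠ 0)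
    calc μ B ≤ ν (A n) + (n : ℝ≥0∞)⁻¹ := hAle n
      _ ≤ ν U + ε := add_le_add (measure_mono (subset_iUnion A n)) hn.le
  have hνV : ν V ≤ μ B := by
    refine ENNReal.le_of_forall_pos_le_add fun ε hε hfin => ?_
    obtain ⟨n, hn⟩ := ENNReal.exists_inv_nat_lt (by exact_mod_cast hε.ne' : (ε : ℝ≥0∞) ≠ 0)
    calc ν V ≤ ν (C n) := measure_mono (iInter_subset C n)
      _ ≤ μ B + (n : ℝ≥0∞)⁻¹ := hCle n
      _ ≤ μ B + ε := add_le_add_right hn.le _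
  have hdiff : ν (ρ ⁻¹' B \ U) = 0 := by
    have hsub : ρ ⁻¹' B \ U ⊆ V \ U := diff_subset_diff_left hVsub
    have : ν (V \ U) = 0 := by
      have hUV : ν V ≤ ν U := le_trans hνV hμU
      rw [measure_diff (fun x hx => hVsub (hUsub hx)) hUm.nullMeasurableSet
        (measure_ne_top ν U)]
      exact tsub_eq_zero_of_le hUV
    exact measure_mono_null hsub this
  have haeeq : ρ ⁻¹' B =ᵐ[ν] U := by
    rw [Filter.eventuallyEq_set]
    have h1 : ν (ρ ⁻¹' B \ U) = 0 := hdiff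
    have h2 : ν (U \ ρ ⁻¹' B) = 0 := by
      rw [diff_eq_empty.mpr hUsub]; simp
    filter_upwards [measure_eq_zero_iff_ae_notMem.mp h1, measure_eq_zero_iff_ae_notMem.mp h2] with x hx hx'
    constructor
    · intro hxB
      by_contra hxU
      exact hx ⟨hxB, hxU⟩
    · intro hxU
      by_contra hxB
      exact hx' ⟨hxU, hxB⟩
  refine ⟨hUm.nullMeasurableSet.congr haeeq.symm, ?_⟩
  have hmeq : ν (ρ ⁻¹' B) = ν U := measure_congr haeeq
  rw [hmeq]
  refine le_antisymm ?_ hμU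
  calc ν U ≤ ν V := measure_mono (hUsub.trans hVsub)
    _ ≤ μ B := hνV
end

section
/- Let (Ω_j, 𝓕_j, μ_j) for j = 1, …, n be probability spaces and μ the product measure on Ω = ∏_j Ω_j. For each nonempty s ⊆ [n], let 𝓑_s be the sub-σ-algebra of events depending only on the coordinates in s. Suppose for each s ⊆ [n] we have B_s ∈ 𝓑_s such that B_s is independent (under μ) of the σ-algebra generated by ⋃_{t ⊊ s} 𝓑_t, and moreover for every fixing of the coordinates outside a maximal s, such independence holds conditionally as in Fubini's theorem. Then μ(⋂_{s ⊆ [n]} B_s) = ∏_{s ⊆ [n]} μ(B_s). -/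
/-!
Induct on the family `S` of index sets, peeling off a maximal `s ∈ S`. Every other `t ∈ S`
misses some coordinate of `s`, so `B t` depends only on the coordinates in the proper subset
`t ∩ s` of `s` and on those outside `s`. The event `B s` is independent of the former by
hypothesis, and everything depending on the coordinates in `s` is independent of the coordinates
outside `s` under the product measure; together these make `B s` independent of `⋂ t ≠ s, B t`.
-/

open MeasureTheory Set

variable {n : ℕ} {Ω : Fin n → Type*} [∀ j, MeasurableSpace (Ω j)]

/-- The sub-σ-algebra of the product space consisting of events depending only on
the coordinates in `s`. -/
def coordAlg (Ω : Fin n → Type*) [∀ j, MeasurableSpace (Ω j)] (s : Finset (Fin n)) :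
    MeasurableSpace (∀ j, Ω j) :=
  MeasurableSpace.comap (fun ω => fun j : {j // j ∈ s} => ω j.1) inferInstance

open ProbabilityTheory MeasurableSpace

section Independence

variable {α : Type*} {mα : MeasurableSpace α} {μ : Measure α} [IsProbabilityMeasure μ]

lemma indep_generateFrom_singleton {m : MeasurableSpace α} {B : Set α} (hB : MeasurableSet[mα] B)
    (hm : m ≤ mα) (h : ∀ A, MeasurableSet[m] A → μ (B ∩ A) = μ B * μ A) :
    Indep (generateFrom {B}) m μ := by
  refine IndepSets.indep (generateFrom_le (by simpa)) hm (IsPiSystem.singleton B)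
    (@isPiSystem_measurableSet _ m) rfl (@generateFrom_measurableSet _ m).symm ?_
  rw [IndepSets_iff]
  rintro _ A rfl hA
  exact h A hA

lemma indep_sup_right_of_indep_sup_left {m₁ m₂ m₃ : MeasurableSpace α}
    (h₁ : m₁ ≤ mα) (h₂ : m₂ ≤ mα) (h₃ : m₃ ≤ mα)
    (h₁₂ : Indep m₁ m₂ μ) (h₁₂₃ : Indep (m₁ ⊔ m₂) m₃ μ) :
    Indep m₁ (m₂ ⊔ m₃) μ := by
  rw [Indep_iff] at h₁₂ h₁₂₃
  let p : Set (Set α) := image2 (· ∩ ·) {a | MeasurableSet[m₂] a} {c | MeasurableSet[m₃] c}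
  have hp : IsPiSystem p := by
    rintro _ ⟨a, ha, c, hc, rfl⟩ _ ⟨a', ha', c', hc', rfl⟩ _
    exact ⟨a ∩ a', ha.inter ha', c ∩ c', hc.inter hc', (inter_inter_inter_comm a c a' c').symm⟩
  have hgen : m₂ ⊔ m₃ = generateFrom p := by
    refine le_antisymm (sup_le ?_ ?_) (generateFrom_le ?_)
    · exact fun a ha => measurableSet_generateFrom ⟨a, ha, univ, .univ, inter_univ a⟩
    · exact fun c hc => measurableSet_generateFrom ⟨univ, .univ, c, hc, univ_inter c⟩
    · rintro _ ⟨a, ha, c, hc, rfl⟩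
      exact (le_sup_left (b := m₃) _ ha).inter (le_sup_right (a := m₂) _ hc)
  refine IndepSets.indep h₁ (sup_le h₂ h₃) (@isPiSystem_measurableSet _ m₁) hp
    (@generateFrom_measurableSet _ m₁).symm hgen ?_
  rw [IndepSets_iff]
  rintro b _ hb ⟨a, ha, c, hc, rfl⟩
  have hbac : μ (b ∩ a ∩ c) = μ (b ∩ a) * μ c :=
    h₁₂₃ _ _ ((le_sup_left (b := m₂) _ hb).inter (le_sup_right (a := m₁) _ ha)) hc
  have hac : μ (a ∩ c) = μ a * μ c := h₁₂₃ _ _ (le_sup_right (a := m₁) _ ha) hc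
  rw [← inter_assoc, hbac, h₁₂ _ _ hb ha, hac, mul_assoc]

end Independence

lemma coordAlg_eq_iSup_comap (s : Finset (Fin n)) :
    coordAlg Ω s = ⨆ j ∈ s, MeasurableSpace.comap (fun ω : ∀ j, Ω j => ω j) inferInstance := by
  rw [coordAlg, iSup_subtype']
  change MeasurableSpace.comap _ MeasurableSpace.pi = _
  simp only [MeasurableSpace.pi, MeasurableSpace.comap_iSup, MeasurableSpace.comap_comp, Function.comp_def]

lemma coordAlg_mono {s t : Finset (Fin n)} (h : s ⊆ t) : coordAlg Ω s ≤ coordAlg Ω t := by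
  simp only [coordAlg_eq_iSup_comap]
  exact biSup_mono h

lemma coordAlg_union (s t : Finset (Fin n)) :
    coordAlg Ω (s ∪ t) = coordAlg Ω s ⊔ coordAlg Ω t := by
  classical
  simp only [coordAlg_eq_iSup_comap, Finset.iSup_union]

lemma coordAlg_le_pi (s : Finset (Fin n)) : coordAlg Ω s ≤ MeasurableSpace.pi := by
  rw [coordAlg_eq_iSup_comap]
  exact iSup₂_le fun j _ => (measurable_pi_apply j).comap_le

lemma indep_coordAlg_compl (μs : ∀ j, Measure (Ω j)) [∀ j, IsProbabilityMeasure (μs j)]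
    (s : Finset (Fin n)) :
    Indep (coordAlg Ω s) (coordAlg Ω sᶜ) (Measure.pi μs) := by
  have h := (iIndepFun_iff_iIndep _ _ _).mp
    (iIndepFun_pi (μ := μs) (X := fun j (x : Ω j) => x) fun j => aemeasurable_id)
  have := indep_iSup_of_disjoint (fun j => (measurable_pi_apply j).comap_le) h
    (S := (s : Set (Fin n))) (T := ((sᶜ : Finset (Fin n)) : Set (Fin n)))
    (by simpa using disjoint_compl_right)
  simpa [coordAlg_eq_iSup_comap] using this

lemma coordAlg_le_sup_compl_of_not_subset {s t : Finset (Fin n)} (h : ¬ s ⊆ t) :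
    coordAlg Ω t ≤ (⨆ r ∈ {r : Finset (Fin n) | r ⊂ s}, coordAlg Ω r) ⊔ coordAlg Ω sᶜ := by
  have hts : t ∩ s ⊂ s :=
    Finset.ssubset_iff_subset_ne.mpr ⟨Finset.inter_subset_right,
      fun e => h (e ▸ Finset.inter_subset_left)⟩
  calc coordAlg Ω t ≤ coordAlg Ω (t ∩ s ∪ sᶜ) :=
        coordAlg_mono fun j hj => by by_cases hjs : j ∈ s <;> simp [hj, hjs]
    _ = coordAlg Ω (t ∩ s) ⊔ coordAlg Ω sᶜ := coordAlg_union _ _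
    _ ≤ _ := sup_le_sup_right
        (le_iSup₂ (f := fun r (_ : r ∈ {r : Finset (Fin n) | r ⊂ s}) => coordAlg Ω r) _ hts) _

section Product

variable (μs : ∀ j, Measure (Ω j)) [∀ j, IsProbabilityMeasure (μs j)]
  {B : Finset (Fin n) → Set (∀ j, Ω j)}

lemma indep_generateFrom_sup_coordAlg_compl {s : Finset (Fin n)}
    (hBs : MeasurableSet[coordAlg Ω s] (B s))
    (hinds : ∀ A : Set (∀ j, Ω j),
      MeasurableSet[⨆ t ∈ {t : Finset (Fin n) | t ⊂ s}, coordAlg Ω t] A →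
      Measure.pi μs (B s ∩ A) = Measure.pi μs (B s) * Measure.pi μs A) :
    Indep (generateFrom {B s})
      ((⨆ t ∈ {t : Finset (Fin n) | t ⊂ s}, coordAlg Ω t) ⊔ coordAlg Ω sᶜ) (Measure.pi μs) := by
  have hB_le : generateFrom {B s} ≤ coordAlg Ω s := generateFrom_le (by simpa using hBs)
  have hG_le : ⨆ t ∈ {t : Finset (Fin n) | t ⊂ s}, coordAlg Ω t ≤ coordAlg Ω s :=
    iSup₂_le fun t ht => coordAlg_mono ht.subset
  refine indep_sup_right_of_indep_sup_left (hB_le.trans (coordAlg_le_pi s))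
    (hG_le.trans (coordAlg_le_pi s)) (coordAlg_le_pi sᶜ) ?_ ?_
  · exact indep_generateFrom_singleton (coordAlg_le_pi s _ hBs) (hG_le.trans (coordAlg_le_pi s))
      hinds
  · exact indep_of_indep_of_le_left (indep_coordAlg_compl μs s) (sup_le hB_le hG_le)

theorem measure_pi_biInter_eq_prod
    (hBmeas : ∀ s, MeasurableSet[coordAlg Ω s] (B s))
    (hind : ∀ s : Finset (Fin n), ∀ A : Set (∀ j, Ω j),
      MeasurableSet[⨆ t ∈ {t : Finset (Fin n) | t ⊂ s}, coordAlg Ω t] A →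
      Measure.pi μs (B s ∩ A) = Measure.pi μs (B s) * Measure.pi μs A)
    (S : Finset (Finset (Fin n))) :
    Measure.pi μs (⋂ t ∈ S, B t) = ∏ t ∈ S, Measure.pi μs (B t) := by
  classical
  induction S using Finset.strongInduction with
  | H S ih =>
  obtain rfl | hS := S.eq_empty_or_nonempty
  · simp
  obtain ⟨s, hs, hmax⟩ := S.exists_maximal hS
  have hrest : MeasurableSet[(⨆ t ∈ {t : Finset (Fin n) | t ⊂ s}, coordAlg Ω t) ⊔ coordAlg Ω sᶜ]
      (⋂ t ∈ S.erase s, B t) := by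
    refine Finset.measurableSet_biInter _ fun t ht => coordAlg_le_sup_compl_of_not_subset
      (fun hst => ?_) _ (hBmeas t)
    exact Finset.ne_of_mem_erase ht (le_antisymm (hmax (Finset.mem_of_mem_erase ht) hst) hst)
  have hindep := indep_generateFrom_sup_coordAlg_compl μs (hBmeas s) (hind s)
  rw [← Finset.insert_erase hs, Finset.set_biInter_insert,
    Finset.prod_insert (Finset.notMem_erase s S),
    (hindep.indepSet_of_measurableSet (measurableSet_generateFrom rfl) hrest).measure_inter_eq_mul,
    ih _ (Finset.erase_ssubset hs)]

end Product

/-- If for each `s ⊆ [n]` the event `B_s` depends only on the coordinates in `s`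
and is independent of the σ-algebra generated by the `𝓑_t` for `t ⊊ s`, then under
the product measure `μ(⋂_s B_s) = ∏_s μ(B_s)`. -/
theorem stmt5 (μs : ∀ j, Measure (Ω j)) [∀ j, IsProbabilityMeasure (μs j)]
    (B : Finset (Fin n) → Set (∀ j, Ω j))
    (hBmeas : ∀ s, MeasurableSet[coordAlg Ω s] (B s))
    (hind : ∀ s : Finset (Fin n), ∀ A : Set (∀ j, Ω j),
      MeasurableSet[⨆ t ∈ {t : Finset (Fin n) | t ⊂ s}, coordAlg Ω t] A →
      Measure.pi μs (B s ∩ A) = Measure.pi μs (B s) * Measure.pi μs A) :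
    Measure.pi μs (⋂ s : Finset (Fin n), B s)
      = ∏ s : Finset (Fin n), Measure.pi μs (B s) := by
  simpa using measure_pi_biInter_eq_prod μs hBmeas hind Finset.univ
end

section
/- Let μ be a probability measure on a measurable space (X, 𝓑), let 𝓚 ⊆ 𝓑 with μ 𝓚-inner regular, and let (Δ, 𝓓, ν) be a probability space. Suppose F : Δ → X satisfies: for all K ∈ 𝓚, the set {δ : F(δ) ∈ K} contains a ν-measurable set of measure μ(K), and for all K ∈ 𝓚 with K ⊆ X ∖ B the corresponding sets are disjoint from {δ : F(δ) ∈ B}. Then for every B ∈ 𝓑, the set F⁻¹(B) is measurable in the ν-completion of 𝓓 and ν(F⁻¹(B)) = μ(B). -/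
open MeasureTheory Set Filter Topology ENNReal

/-- If `μ` is `𝓚`-inner regular and `F : Δ → X` is such that for each `K ∈ 𝓚`
the preimage `F⁻¹(K)` contains a `ν`-measurable set of measure `μ K`, then for
every measurable `B`, `F⁻¹(B)` is measurable in the `ν`-completion and has
measure `μ B`. -/
theorem stmt17 {X Δ : Type*} [MeasurableSpace X] [MeasurableSpace Δ]
    (μ : Measure X) [IsProbabilityMeasure μ] (ν : Measure Δ) [IsProbabilityMeasure ν]
    (𝓚 : Set (Set X)) (h𝓚meas : ∀ K ∈ 𝓚, MeasurableSet K)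
    (hreg : ∀ B : Set X, MeasurableSet B →
      μ B = ⨆ (K : Set X) (_ : K ∈ 𝓚 ∧ K ⊆ B), μ K)
    (F : Δ → X)
    (hF : ∀ K ∈ 𝓚, ∃ A : Set Δ, MeasurableSet A ∧ A ⊆ F ⁻¹' K ∧ ν A = μ K) :
    ∀ B : Set X, MeasurableSet B →
      NullMeasurableSet (F ⁻¹' B) ν ∧ ν (F ⁻¹' B) = μ B := by
  -- inner approximation of any measurable set's preimage
  have inner : ∀ B : Set X, MeasurableSet B →
      ∃ S : Set Δ, MeasurableSet S ∧ S ⊆ F ⁻¹' B ∧ μ B ≤ ν S := by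
    intro B hB
    have hsup : μ B = sSup ((fun K => μ K) '' {K | K ∈ 𝓚 ∧ K ⊆ B}) := by
      rw [hreg B hB, sSup_image]
      simp only [mem_setOf_eq]
    rcases ((fun K => μ K) '' {K | K ∈ 𝓚 ∧ K ⊆ B}).eq_empty_or_nonempty with hTe | hTne
    · refine ⟨∅, MeasurableSet.empty, empty_subset _, ?_⟩
      simp [hsup, hTe]
    · obtain ⟨u, hu_mono, hu_tendsto, hu_mem⟩ :=
        exists_seq_tendsto_sSup hTne (OrderTop.bddAbove _)
      choose K hK hKval using hu_mem
      choose A hAm hAsub hAval using fun n => hF (K n) (hK n).1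
      refine ⟨⋃ n, A n, MeasurableSet.iUnion hAm, ?_, ?_⟩
      · exact iUnion_subset fun n => (hAsub n).trans (preimage_mono (hK n).2)
      · rw [hsup]
        refine le_of_tendsto' hu_tendsto fun n => ?_
        calc u n = ν (A n) := by rw [hAval n]; exact (hKval n).symm
          _ ≤ ν (⋃ n, A n) := measure_mono (subset_iUnion A n)
  intro B hB
  obtain ⟨S₁, hS₁m, hS₁sub, hS₁ge⟩ := inner B hB
  obtain ⟨S₂, hS₂m, hS₂sub, hS₂ge⟩ := inner Bᶜ hB.compl
  have hdisj : Disjoint S₁ S₂ :=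
    Disjoint.mono hS₁sub hS₂sub (by rw [preimage_compl]; exact disjoint_compl_right)
  have hsum : ν S₁ + ν S₂ ≤ 1 := by
    rw [← measure_union hdisj hS₂m]
    exact (measure_mono (subset_univ _)).trans_eq measure_univ
  have hμsum : μ B + μ Bᶜ = 1 := by
    rw [measure_add_measure_compl hB, measure_univ]
  have hne1 : ν S₁ ≠ ⊤ := measure_ne_top ν S₁
  have hne2 : ν S₂ ≠ ⊤ := measure_ne_top ν S₂
  have h1 : ν S₁ = μ B := by
    refine le_antisymm ?_ hS₁ge
    by_contra h
    push_neg at h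
    have : (1 : ℝ≥0∞) < 1 := by
      calc (1 : ℝ≥0∞) = μ B + μ Bᶜ := hμsum.symm
        _ < ν S₁ + ν S₂ := ENNReal.add_lt_add_of_lt_of_le (measure_ne_top μ Bᶜ) h hS₂ge
        _ ≤ 1 := hsum
    exact lt_irrefl _ this
  have h2 : ν S₂ = μ Bᶜ := by
    refine le_antisymm ?_ hS₂ge
    by_contra h
    push_neg at h
    have : (1 : ℝ≥0∞) < 1 := by
      calc (1 : ℝ≥0∞) = μ B + μ Bᶜ := hμsum.symm
        _ < ν S₁ + ν S₂ := ENNReal.add_lt_add_of_le_of_lt (measure_ne_top μ B) hS₁ge h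
        _ ≤ 1 := hsum
    exact lt_irrefl _ this
  -- νS₂ᶜ = μ B
  have hcompl : ν S₂ᶜ = μ B := by
    have := measure_compl hS₂m hne2
    rw [measure_univ, h2] at this
    rw [this, ← hμsum, ENNReal.add_sub_cancel_right (measure_ne_top μ Bᶜ)]
  have hsub2 : F ⁻¹' B ⊆ S₂ᶜ := by
    intro x hx hxS
    exact absurd hx (hS₂sub hxS)
  have hdiff : ν (S₂ᶜ \ S₁) = 0 := by
    have hsub12 : S₁ ⊆ S₂ᶜ := hS₁sub.trans hsub2
    rw [measure_diff hsub12 hS₁m.nullMeasurableSet hne1, hcompl, h1, tsub_self]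
  have haeeq : F ⁻¹' B =ᵐ[ν] S₁ := by
    rw [ae_eq_set]
    constructor
    · exact measure_mono_null (fun x hx => mem_diff_of_mem (hsub2 hx.1) hx.2) hdiff
    · rw [diff_eq_empty.mpr hS₁sub, measure_empty]
  exact ⟨hS₁m.nullMeasurableSet.congr haeeq.symm, by rw [measure_congr haeeq, h1]⟩
end
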